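/- arXiv:2604.18782 — 5 statements merged into one kernel-verified Lean document; each statement's English description precedes it below -/
import Mathlib

section
/- Let X be a type with decidable equality, let γ_1, …, γ_n be permutations of X, let p, x ∈ X, and let i < j be indices in {1,…,n} such that γ_k p = p for every k with i < k < j. Set α := γ_{j-1} * ⋯ * γ_{i+1} (with α = 1 if j = i+1), and define γ'_i := (Equiv.swap (α⁻¹ x) p) * γ_i, γ'_j := γ_j * (Equiv.swap x p), and γ'_k := γ_k for all k ∉ {i, j}. Then γ'_n * γ'_{n-1} * ⋯ * γ'_1 = γ_n * γ_{n-1} * ⋯ * γ_1. -/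
/-!
Cut the product at positions `i` and `j`: it reads `U * γ j * α * γ i * L`, and only the middle
block changes. Since `α` fixes `p`, conjugating a transposition by `α` gives
`swap x p * α = α * swap (α⁻¹ x) p`, so the two inserted transpositions cancel.
-/

open Equiv List

theorem Equiv.Perm.list_prod_apply_eq_self {X : Type*} {l : List (Perm X)} {p : X}
    (h : ∀ σ ∈ l, σ p = p) : l.prod p = p :=
  (MulAction.stabilizer (Perm X) p).list_prod_mem h

theorem Equiv.swap_mul_mul_swap_eq_self_of_apply_eq {X : Type*} [DecidableEq X]
    {α : Perm X} {p : X} (hα : α p = p) (x : X) : swap x p * α * swap (α⁻¹ x) p = α := by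
  have hαinv : α⁻¹ p = p := by rw [Perm.inv_eq_iff_eq, hα]
  rw [swap_mul_eq_mul_swap, hαinv, mul_assoc, swap_mul_self, mul_one]

theorem List.prod_map_reverse_range'_eq_mul_mul {M : Type*} [Monoid M] (f : ℕ → M)
    {s n i : ℕ} (hs : s ≤ i) (hi : i < s + n) :
    ((range' s n).reverse.map f).prod =
      ((range' (i + 1) (s + n - (i + 1))).reverse.map f).prod * f i *
        ((range' s (i - s)).reverse.map f).prod := by
  obtain ⟨a, b, rfl, rfl⟩ : ∃ a b, i = s + a ∧ n = a + (1 + b) :=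
    ⟨i - s, n - (i - s) - 1, by omega, by omega⟩
  rw [← range'_append_1, ← range'_append_1]
  simp [mul_assoc, show s + (a + (1 + b)) - (s + a + 1) = b by omega]

/-- **Augmentation lemma, part (i).** Let `γ 1, …, γ n` be permutations of `X`, let
`p, x ∈ X`, and let `1 ≤ i < j ≤ n` be indices such that `γ k p = p` for all `i < k < j`.
Set `α := γ (j-1) * ⋯ * γ (i+1)` (so `α = 1` if `j = i + 1`), and define
`γ' i := swap (α⁻¹ x) p * γ i`, `γ' j := γ j * swap x p` and `γ' k := γ k` otherwise.
Then `γ' n * ⋯ * γ' 1 = γ n * ⋯ * γ 1`. -/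
theorem augmentation_total_product {X : Type*} [DecidableEq X]
    (n : ℕ) (γ : ℕ → Equiv.Perm X) (p x : X) (i j : ℕ)
    (h1i : 1 ≤ i) (hij : i < j) (hjn : j ≤ n)
    (hfix : ∀ k, i < k → k < j → γ k p = p) :
    let α : Equiv.Perm X := (((List.range' (i + 1) (j - 1 - i)).reverse).map γ).prod
    let γ' : ℕ → Equiv.Perm X := fun k =>
      if k = i then Equiv.swap (α⁻¹ x) p * γ i
      else if k = j then γ j * Equiv.swap x p
      else γ k
    (((List.range' 1 n).reverse).map γ').prod = (((List.range' 1 n).reverse).map γ).prod := by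
  intro α γ'
  have hsplit (f : ℕ → Perm X) : ((range' 1 n).reverse.map f).prod =
      ((range' (j + 1) (n - j)).reverse.map f).prod * f j *
        ((range' (i + 1) (j - 1 - i)).reverse.map f).prod * f i *
          ((range' 1 (i - 1)).reverse.map f).prod := by
    rw [prod_map_reverse_range'_eq_mul_mul f h1i (by omega),
      prod_map_reverse_range'_eq_mul_mul f (i := j) (by omega) (by omega),
      show i + 1 + (1 + n - (i + 1)) - (j + 1) = n - j by omega,
      show j - (i + 1) = j - 1 - i by omega]
  have hagree {s m : ℕ} (hm : ∀ k, s ≤ k → k < s + m → k ≠ i ∧ k ≠ j) :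
      ((range' s m).reverse.map γ').prod = ((range' s m).reverse.map γ).prod := by
    refine congrArg _ (map_congr_left fun k hk => ?_)
    rw [mem_reverse, mem_range'_1] at hk
    obtain ⟨hki, hkj⟩ := hm k hk.1 hk.2
    simp only [γ', if_neg hki, if_neg hkj]
  have hαp : α p = p := Perm.list_prod_apply_eq_self fun σ hσ => by
    obtain ⟨k, hk, rfl⟩ := mem_map.1 hσ
    rw [mem_reverse, mem_range'_1] at hk
    exact hfix k (by omega) (by omega)
  have hcore : γ' j * α * γ' i = γ j * α * γ i := calc
    γ' j * α * γ' i = γ j * (swap x p * α * swap (α⁻¹ x) p) * γ i := by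
      simp only [γ', if_neg hij.ne', ↓reduceIte, mul_assoc]
    _ = γ j * α * γ i := by rw [swap_mul_mul_swap_eq_self_of_apply_eq hαp]
  rw [hsplit, hsplit, hagree (by omega), hagree (by omega), hagree (by omega)]
  simpa only [mul_assoc] using
    congrArg (fun g => ((range' (j + 1) (n - j)).reverse.map γ).prod * g *
      ((range' 1 (i - 1)).reverse.map γ).prod) hcore
end

section
/- Let X be a finite type with decidable equality, let p ∈ X, and let γ_1, …, γ_n be permutations of X each fixing p (γ_k p = p for all k), such that for all a, b ∈ X with a ≠ p and b ≠ p there exists an element τ of the subgroup generated by {γ_1, …, γ_n} with τ a = b. Let i ≠ j be indices and let x, y ∈ X with x ≠ p and y ≠ p. Define γ'_i := (Equiv.swap y p) * γ_i, γ'_j := γ_j * (Equiv.swap x p), and γ'_k := γ_k for k ∉ {i, j}. Then the subgroup of Equiv.Perm X generated by {γ'_1, …, γ'_n} acts transitively on X: for all a, b ∈ X there exists τ in this subgroup with τ a = b. -/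
/-!
Let `G'` be the group generated by the augmented permutations and `O` the `G'`-orbit of `p`.
Since `γ' i` sends `p` to `y` and `γ' j` sends `x` to `p`, both `y` and `x` lie in `O`, so the
transpositions `swap y p` and `swap x p` stabilise `O`. Each original `γ k` is a product of an
augmented permutation and at most one of these transpositions, so the original group also
stabilises `O`. Being transitive on the complement of `p`, it carries `y` anywhere outside `p`;
hence `O` is everything and `G'` is transitive.
-/

open Equiv MulAction Pointwise

section InvariantSet

variable {G α : Type*} [Group G] [MulAction G α]

theorem Subgroup.le_stabilizer_orbit (H : Subgroup G) (a : α) :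
    H ≤ stabilizer G (orbit H a) := fun h hh =>
  mem_stabilizer_iff.2 (smul_orbit (⟨h, hh⟩ : H) a)

theorem MulAction.eq_univ_of_le_stabilizer {K : Subgroup G} {S : Set α} {p y : α}
    (hK : K ≤ stabilizer G S)
    (htrans : ∀ a b : α, a ≠ p → b ≠ p → ∃ τ ∈ K, τ • a = b)
    (hp : p ∈ S) (hy : y ∈ S) (hyp : y ≠ p) : S = Set.univ := by
  refine Set.eq_univ_of_forall fun b => ?_
  rcases eq_or_ne b p with rfl | hb
  · exact hp
  obtain ⟨τ, hτ, rfl⟩ := htrans y b hyp hb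
  rw [← mem_stabilizer_iff.1 (hK hτ)]
  exact Set.smul_mem_smul_set hy

theorem Subgroup.exists_smul_eq_of_orbit_eq_univ {H : Subgroup G} {p : α}
    (h : orbit H p = Set.univ) (a b : α) : ∃ τ ∈ H, τ • a = b := by
  have := (isPretransitive_iff_orbit_eq_univ p).2 h
  obtain ⟨τ, rfl⟩ := MulAction.exists_smul_eq H a b
  exact ⟨τ, τ.2, rfl⟩

end InvariantSet

section Augmentation

variable {ι X : Type*} [DecidableEq ι] [DecidableEq X]

/-- The `d`-augmentation of `γ`, with `p` the inserted letter `d`. -/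
def augment (γ : ι → Perm X) (i j : ι) (x y p : X) (k : ι) : Perm X :=
  if k = i then swap y p * γ i
  else if k = j then γ j * swap x p
  else γ k

variable {γ : ι → Perm X} {i j : ι} {x y p : X}

theorem augment_left : augment γ i j x y p i = swap y p * γ i := if_pos rfl

theorem augment_right (hij : i ≠ j) : augment γ i j x y p j = γ j * swap x p := by
  simp [augment, hij.symm]

theorem augment_of_ne {k : ι} (hki : k ≠ i) (hkj : k ≠ j) : augment γ i j x y p k = γ k := by
  simp [augment, hki, hkj]

theorem mem_orbit_closure_augment_left (hfix : γ i p = p) :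
    y ∈ orbit (Subgroup.closure (Set.range (augment γ i j x y p))) p :=
  ⟨⟨_, Subgroup.subset_closure ⟨i, rfl⟩⟩, by simp [Perm.smul_def, augment_left, hfix]⟩

theorem mem_orbit_closure_augment_right (hij : i ≠ j) (hfix : γ j p = p) :
    x ∈ orbit (Subgroup.closure (Set.range (augment γ i j x y p))) p := by
  refine ⟨⟨_, inv_mem (Subgroup.subset_closure ⟨j, rfl⟩)⟩, ?_⟩
  change (augment γ i j x y p j)⁻¹ p = x
  rw [Perm.inv_eq_iff_eq, augment_right hij, Perm.mul_apply, swap_apply_left, hfix]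

theorem closure_range_le_of_augment_le {H : Subgroup (Perm X)} (hij : i ≠ j)
    (hγ' : ∀ k, augment γ i j x y p k ∈ H) (hy : swap y p ∈ H) (hx : swap x p ∈ H) :
    Subgroup.closure (Set.range γ) ≤ H := by
  rw [Subgroup.closure_le]
  rintro _ ⟨k, rfl⟩
  rw [SetLike.mem_coe]
  by_cases hki : k = i
  · subst hki
    simpa only [augment_left, swap_mul_self_mul] using H.mul_mem hy (hγ' k)
  by_cases hkj : k = j
  · subst hkj
    simpa only [augment_right hij, mul_swap_mul_self] using H.mul_mem (hγ' k) hx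
  · simpa only [augment_of_ne hki hkj] using hγ' k

end Augmentation

theorem augmentation_preserves_transitivity_general {X : Type*} [DecidableEq X]
    (p : X) (n : ℕ) (γ : Fin n → Equiv.Perm X) (hfix : ∀ k, γ k p = p)
    (htrans : ∀ a b : X, a ≠ p → b ≠ p →
      ∃ τ ∈ Subgroup.closure (Set.range γ), τ a = b)
    (i j : Fin n) (hij : i ≠ j) (x y : X) (hy : y ≠ p) :
    ∀ a b : X, ∃ τ ∈ Subgroup.closure (Set.range (fun k : Fin n =>
        if k = i then Equiv.swap y p * γ i
        else if k = j then γ j * Equiv.swap x p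
        else γ k)), τ a = b := by
  change ∀ a b : X, ∃ τ ∈ Subgroup.closure (Set.range (augment γ i j x y p)), τ • a = b
  set G' := Subgroup.closure (Set.range (augment γ i j x y p))
  have hyO : y ∈ orbit G' p := mem_orbit_closure_augment_left (hfix i)
  have hxO : x ∈ orbit G' p := mem_orbit_closure_augment_right hij (hfix j)
  have hstab : Subgroup.closure (Set.range γ) ≤ stabilizer (Perm X) (orbit G' p) :=
    closure_range_le_of_augment_le hij
      (fun k => G'.le_stabilizer_orbit p (Subgroup.subset_closure ⟨k, rfl⟩))
      (swap_mem_stabilizer.2 (iff_of_true hyO (mem_orbit_self p)))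
      (swap_mem_stabilizer.2 (iff_of_true hxO (mem_orbit_self p)))
  exact Subgroup.exists_smul_eq_of_orbit_eq_univ
    (MulAction.eq_univ_of_le_stabilizer hstab htrans (mem_orbit_self p) hyO hy)

/-- **Augmentation lemma, part (ii).** Let `X` be a finite type, `p ∈ X`, and
`γ 0, …, γ (n-1)` permutations of `X` each fixing `p` and generating a subgroup acting
transitively on the complement of `p`. Let `i ≠ j` be indices and `x, y ∈ X` with
`x ≠ p`, `y ≠ p`. Define `γ' i := swap y p * γ i`, `γ' j := γ j * swap x p` and
`γ' k := γ k` otherwise. Then the subgroup generated by the `γ' k` acts transitively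
on all of `X`. -/
theorem augmentation_preserves_transitivity {X : Type*} [Fintype X] [DecidableEq X]
    (p : X) (n : ℕ) (γ : Fin n → Equiv.Perm X) (hfix : ∀ k, γ k p = p)
    (htrans : ∀ a b : X, a ≠ p → b ≠ p →
      ∃ τ ∈ Subgroup.closure (Set.range γ), τ a = b)
    (i j : Fin n) (hij : i ≠ j) (x y : X) (hx : x ≠ p) (hy : y ≠ p) :
    ∀ a b : X, ∃ τ ∈ Subgroup.closure (Set.range (fun k : Fin n =>
        if k = i then Equiv.swap y p * γ i
        else if k = j then γ j * Equiv.swap x p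
        else γ k)), τ a = b :=
  augmentation_preserves_transitivity_general p n γ hfix htrans i j hij x y hy
end

section
/- Let d ≥ 2 and n ≥ 2 be integers such that n(d-1) is even. Then there exist permutations σ_1, …, σ_n of Fin d, each a cycle of length d (σ_i.IsCycle and σ_i.support.card = d), such that σ_n * ⋯ * σ_1 = 1. -/
/-!
All the `σ i` can be taken to be powers `c ^ k i` of the rotation `c` of `Fin d`: such a power is
again a `d`-cycle when `k i` is coprime to `d`, and the product is `c ^ ∑ k i`. So it suffices to
find `n` integers coprime to `d` with sum `0`: alternate `1, -1` when `n` is even, and when `n` is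
odd (hence `d` is odd, so `2` is coprime to `d`) start with `2, -1, -1` instead.
-/

open Equiv Equiv.Perm

theorem Equiv.Perm.IsCycle.zpow_of_coprime {β : Type*} [Fintype β] [DecidableEq β]
    {f : Perm β} (hf : f.IsCycle) {k : ℤ} (hk : k.natAbs.Coprime f.support.card) :
    (f ^ k).IsCycle ∧ (f ^ k).support = f.support := by
  rw [← hf.orderOf] at hk
  have hpow : (f ^ k.natAbs).IsCycle ∧ (f ^ k.natAbs).support = f.support := by
    refine ⟨hf.pow_iff.mpr hk, hf.support_pow_eq_iff.mpr fun hdvd => ?_⟩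
    have := hf.two_le_card_support
    rw [← hf.orderOf, Nat.Coprime.eq_one_of_dvd hk.symm hdvd] at this
    omega
  rcases Int.natAbs_eq k with hk | hk <;> rw [hk]
  · simpa only [zpow_natCast] using hpow
  · simpa only [zpow_neg, zpow_natCast, support_inv] using ⟨hpow.1.inv, hpow.2⟩

theorem List.prod_reverse_map_zpow {G : Type*} [Group G] (c : G) (L : List ℤ) :
    (L.map (c ^ ·)).reverse.prod = c ^ L.sum := by
  induction L with
  | nil => simp
  | cons k L ih => simp [ih, ← zpow_add, add_comm]

theorem exists_list_natAbs_eq_one_sum_eq_zero (m : ℕ) :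
    ∃ L : List ℤ, L.length = 2 * m ∧ L.sum = 0 ∧ ∀ k ∈ L, k.natAbs = 1 := by
  refine ⟨(List.replicate m [1, -1]).flatten, ?_, ?_, ?_⟩
  · simp [List.length_flatten, mul_comm]
  · simp [List.sum_flatten]
  · simp only [List.mem_flatten, List.mem_replicate]
    rintro k ⟨_, ⟨-, rfl⟩, hk⟩
    simp only [List.mem_cons, List.not_mem_nil, or_false] at hk
    rcases hk with rfl | rfl <;> rfl

theorem exists_list_coprime_sum_eq_zero {n d : ℕ} (hn : 2 ≤ n) (h : Even n ∨ Odd d) :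
    ∃ L : List ℤ, L.length = n ∧ L.sum = 0 ∧ ∀ k ∈ L, k.natAbs.Coprime d := by
  rcases Nat.even_or_odd' n with ⟨m, rfl | rfl⟩
  · obtain ⟨L, hlen, hsum, hL⟩ := exists_list_natAbs_eq_one_sum_eq_zero m
    exact ⟨L, hlen, hsum, fun k hk => (hL k hk).symm ▸ Nat.coprime_one_left d⟩
  · have hd : Odd d := h.resolve_left (by simp)
    obtain ⟨L, hlen, hsum, hL⟩ := exists_list_natAbs_eq_one_sum_eq_zero (m - 1)
    refine ⟨[2, -1, -1] ++ L, by simp only [List.length_append, List.length_cons, List.length_nil, hlen]; omega, by simp [hsum], ?_⟩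
    simp only [List.cons_append, List.mem_cons, List.nil_append]
    rintro k (rfl | rfl | rfl | hk)
    · exact Nat.coprime_two_left.mpr hd
    · exact Nat.coprime_one_left d
    · exact Nat.coprime_one_left d
    · exact (hL k hk).symm ▸ Nat.coprime_one_left d

/-- **Base case II: all ramification orders equal to the degree.** Let `d ≥ 2`, `n ≥ 2`
with `n * (d - 1)` even. Then there exist permutations `σ 0, …, σ (n-1)` of `Fin d`, each
a cycle of length `d`, whose product `σ (n-1) * ⋯ * σ 0` is the identity. -/
theorem full_cycles_with_trivial_product (d n : ℕ) (hd : 2 ≤ d) (hn : 2 ≤ n)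
    (heven : Even (n * (d - 1))) :
    ∃ σ : Fin n → Equiv.Perm (Fin d),
      (∀ i, (σ i).IsCycle ∧ (σ i).support.card = d) ∧
      ((List.ofFn σ).reverse).prod = 1 := by
  have hparity : Even n ∨ Odd d := by
    rcases Nat.even_mul.mp heven with h | h
    · exact .inl h
    · exact .inr (by simpa [Nat.sub_add_cancel (by omega : 1 ≤ d)] using h.add_one)
  obtain ⟨L, rfl, hsum, hcop⟩ := exists_list_coprime_sum_eq_zero hn hparity
  have hc : (finRotate d).IsCycle := isCycle_finRotate_of_le hd
  have hcard : (finRotate d).support.card = d := by simp [support_finRotate_of_le hd]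
  refine ⟨fun i => finRotate d ^ L[(i : ℕ)], fun i => ?_, ?_⟩
  · obtain ⟨hcyc, hsupp⟩ := hc.zpow_of_coprime (hcard ▸ hcop _ (List.getElem_mem i.isLt))
    exact ⟨hcyc, hsupp ▸ hcard⟩
  · rw [List.ofFn_getElem_eq_map L (finRotate d ^ ·), List.prod_reverse_map_zpow, hsum, zpow_zero]
end

section
/- Let d ≥ 2 and n be integers with n even and n ≥ 2(d - 1). Then there exist permutations σ_1, …, σ_n of Fin d such that: each σ_i is a transposition (a cycle of length 2); σ_n * ⋯ * σ_1 = 1; the subgroup generated by {σ_1, …, σ_n} acts transitively on Fin d; and for every i ∈ {1, …, n-1} the supports of σ_i and σ_{i+1} have nonempty intersection. -/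
/-! Write `d = e + 2`, `n = 2m` and `k = m - (e + 1)`. Take the adjacent transpositions
`(0 1)` `k` times and then `(0 1), (1 2), …, (e, e+1)`, and list each of them twice in a row.
The reversed product cancels pair by pair; two consecutive transpositions are equal or
adjacent, so their supports meet; and every adjacent transposition occurs, so the
transpositions generate the whole symmetric group. -/

open Equiv Equiv.Perm

def adjSwap {e : ℕ} (i : Fin (e + 1)) : Perm (Fin (e + 2)) :=
  swap i.castSucc i.succ

lemma isSwap_adjSwap {e : ℕ} (i : Fin (e + 1)) : (adjSwap i).IsSwap :=
  ⟨_, _, Fin.castSucc_lt_succ.ne, rfl⟩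

lemma adjSwap_mul_self {e : ℕ} (i : Fin (e + 1)) : adjSwap i * adjSwap i = 1 :=
  swap_mul_self _ _

lemma closure_eq_top_of_range_adjSwap_subset {e : ℕ} {S : Set (Perm (Fin (e + 2)))}
    (hS : Set.range (adjSwap (e := e)) ⊆ S) : Subgroup.closure S = ⊤ :=
  top_unique <| (Subgroup.closure_eq_top_of_mclosure_eq_top
    (mclosure_swap_castSucc_succ (e + 1))).ge.trans (Subgroup.closure_mono hS)

lemma support_adjSwap_inter_nonempty {e : ℕ} {i j : Fin (e + 1)}
    (hij : j.val = i.val ∨ j.val = i.val + 1) :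
    ((adjSwap i).support ∩ (adjSwap j).support).Nonempty := by
  refine ⟨j.castSucc, Finset.mem_inter.2 ⟨?_, ?_⟩⟩ <;>
    simp only [adjSwap, support_swap Fin.castSucc_lt_succ.ne, Finset.mem_insert,
      Finset.mem_singleton, Fin.ext_iff, Fin.val_castSucc, Fin.val_succ]
  · exact hij
  · exact Or.inl trivial

lemma List.ofFn_comp_val {α : Type*} (n : ℕ) (f : ℕ → α) :
    List.ofFn (fun i : Fin n => f i) = (List.range n).map f := by
  rw [List.ofFn_eq_map, ← List.map_coe_finRange_eq_range, List.map_map]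
  rfl

lemma prod_reverse_map_range_div_two {G : Type*} [Monoid G] (f : ℕ → G)
    (hf : ∀ j, f j * f j = 1) (m : ℕ) :
    ((List.range (2 * m)).map fun i => f (i / 2)).reverse.prod = 1 := by
  induction m with
  | zero => simp
  | succ m ih =>
    rw [show 2 * (m + 1) = 2 * m + 1 + 1 by ring, List.range_succ, List.range_succ]
    simp only [List.map_append, List.reverse_append, List.prod_append, List.map_cons,
      List.map_nil, List.reverse_cons, List.reverse_nil, List.nil_append, List.prod_cons,
      List.prod_nil, mul_one]
    rw [show (2 * m + 1) / 2 = m by omega, show 2 * m / 2 = m by omega, ← mul_assoc, hf, ih,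
      one_mul]

def ladderIndex (k e j : ℕ) : Fin (e + 1) :=
  ⟨min (j - k) e, by omega⟩

/-- **Base case I: all ramification orders equal to 2.** Let `d ≥ 2` and `n` be even with
`n ≥ 2(d - 1)`. Then there exist transpositions `σ 0, …, σ (n-1)` of `Fin d` (cycles of
length `2`) whose product `σ (n-1) * ⋯ * σ 0` is the identity, generating a transitive
subgroup, and such that consecutive transpositions have intersecting supports. -/
theorem transpositions_with_trivial_product (d n : ℕ) (hd : 2 ≤ d)
    (hn : Even n) (hge : 2 * (d - 1) ≤ n) :
    ∃ σ : Fin n → Equiv.Perm (Fin d),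
      (∀ i, (σ i).IsCycle ∧ (σ i).support.card = 2) ∧
      ((List.ofFn σ).reverse).prod = 1 ∧
      (∀ a b : Fin d, ∃ τ ∈ Subgroup.closure (Set.range σ), τ a = b) ∧
      (∀ i : ℕ, ∀ h : i + 1 < n,
        ((σ ⟨i, Nat.lt_of_succ_lt h⟩).support ∩ (σ ⟨i + 1, h⟩).support).Nonempty) := by
  obtain ⟨e, rfl⟩ : ∃ e, d = e + 2 := ⟨d - 2, by omega⟩
  obtain ⟨m, rfl⟩ := hn
  set k := m - (e + 1)
  let T : ℕ → Perm (Fin (e + 2)) := fun j => adjSwap (ladderIndex k e j)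
  refine ⟨fun i => T (i / 2), fun i => ?_, ?_, fun a b => ?_, fun i h => ?_⟩
  · exact ⟨(isSwap_adjSwap _).isCycle, card_support_eq_two.2 (isSwap_adjSwap _)⟩
  · rw [List.ofFn_comp_val _ fun i => T (i / 2), ← two_mul]
    exact prod_reverse_map_range_div_two _ (fun _ => adjSwap_mul_self _) m
  · have hrange :
        Set.range (adjSwap (e := e)) ⊆ Set.range fun i : Fin (m + m) => T (i / 2) := by
      rintro _ ⟨j, rfl⟩
      refine ⟨⟨2 * (k + j), by omega⟩, ?_⟩
      simp only [T, ladderIndex, show 2 * (k + j) / 2 = k + j by omega,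
        show min (k + j - k) e = j by omega]
    rw [closure_eq_top_of_range_adjSwap_subset hrange]
    exact ⟨swap a b, Subgroup.mem_top _, swap_apply_left a b⟩
  · exact support_adjSwap_inter_nonempty (by simp only [ladderIndex]; omega)
end

section
/- For every integer n ≥ 3, there do not exist permutations σ_1, …, σ_n of Fin 4 such that σ_1, …, σ_{n-1} each have cycle type {2,2}, σ_n is a 3-cycle, and σ_n * σ_{n-1} * ⋯ * σ_1 = 1. Consequently, there is no degree-4 branched cover of ℙ¹ with ramification profiles [2,2] over n−1 branch points and [3,1] over one further branch point, even though these data satisfy the Riemann–Hurwitz formula with g = n − 3. -/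
/-!
The double transpositions of a four-element set generate the Klein four-group, in which every
element has order dividing `2`. A product of double transpositions therefore cannot be the inverse
of a 3-cycle, which has order `3`.
-/

namespace Equiv.Perm

variable {α : Type*} [DecidableEq α] [Fintype α]

variable (α) in
def kleinFour : Subgroup (Perm α) :=
  (alternatingGroup.kleinFour α).map (alternatingGroup α).subtype

theorem mem_kleinFour_of_cycleType_eq {g : Perm α} (hg : g.cycleType = {2, 2}) :
    g ∈ kleinFour α := by
  have hg_alt : g ∈ alternatingGroup α := by
    rw [mem_alternatingGroup, sign_of_cycleType, hg]
    decide
  exact ⟨⟨g, hg_alt⟩, Subgroup.subset_closure hg, rfl⟩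

theorem orderOf_dvd_two_of_mem_kleinFour (hα4 : Nat.card α = 4) {g : Perm α}
    (hg : g ∈ kleinFour α) : orderOf g ∣ 2 := by
  obtain ⟨k, hk, rfl⟩ := hg
  rw [Subgroup.coe_subtype, Subgroup.orderOf_coe, ← Subgroup.orderOf_mk k hk,
    ← alternatingGroup.exponent_kleinFour_of_card_eq_four hα4]
  exact Monoid.order_dvd_exponent _

theorem orderOf_list_prod_dvd_two (hα4 : Nat.card α = 4) {l : List (Perm α)}
    (hl : ∀ g ∈ l, g.cycleType = {2, 2}) : orderOf l.prod ∣ 2 :=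
  orderOf_dvd_two_of_mem_kleinFour hα4 <|
    (kleinFour α).list_prod_mem fun g hg => mem_kleinFour_of_cycleType_eq (hl g hg)

theorem IsThreeCycle.mul_list_prod_ne_one (hα4 : Nat.card α = 4) {c : Perm α}
    (hc : c.IsThreeCycle) {l : List (Perm α)} (hl : ∀ g ∈ l, g.cycleType = {2, 2}) :
    c * l.prod ≠ 1 := by
  intro h
  have h2 := orderOf_list_prod_dvd_two hα4 hl
  rw [← inv_eq_of_mul_eq_one_right h, orderOf_inv, hc.orderOf] at h2
  omega

end Equiv.Perm

/-- **Nonexistence example.** For every `n ≥ 3` there are no permutations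
`σ 0, …, σ (n-1)` of `Fin 4` such that `σ 0, …, σ (n-2)` each have cycle type `{2,2}`,
`σ (n-1)` is a 3-cycle (cycle type `{3}`), and `σ (n-1) * ⋯ * σ 0 = 1`. (Hence, by the
Riemann Existence Theorem, there is no degree-4 branched cover of `ℙ¹` with ramification
profiles `[2,2]` over `n-1` branch points and `[3,1]` over one further branch point,
even though these data satisfy the Riemann–Hurwitz formula with `g = n - 3`.) -/
theorem no_cover_with_double_transpositions_and_three_cycle (n : ℕ) (hn : 3 ≤ n) :
    ¬ ∃ σ : Fin n → Equiv.Perm (Fin 4),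
      (∀ i : Fin n, (i : ℕ) + 1 < n → (σ i).cycleType = {2, 2}) ∧
      (σ ⟨n - 1, Nat.sub_lt (by omega) one_pos⟩).cycleType = {3} ∧
      ((List.ofFn σ).reverse).prod = 1 := by
  obtain ⟨m, rfl⟩ : ∃ m, n = m + 1 := ⟨n - 1, by omega⟩
  rintro ⟨σ, h22, h3, hprod⟩
  rw [List.ofFn_succ', List.concat_eq_append, List.reverse_append, List.prod_append] at hprod
  have hrest : ∀ g ∈ (List.ofFn fun i : Fin m => σ i.castSucc).reverse,
      g.cycleType = {2, 2} := by
    intro g hg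
    obtain ⟨i, rfl⟩ := List.mem_ofFn.mp (List.mem_reverse.mp hg)
    exact h22 i.castSucc (by simp)
  exact Equiv.Perm.IsThreeCycle.mul_list_prod_ne_one (Nat.card_fin 4) (c := σ (Fin.last m)) h3
    hrest (by simpa using hprod)
end
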